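/- arXiv:1111.2003 — 3 statements merged into one kernel-verified Lean document; each statement's English description precedes it below -/
import Mathlib

section
/- Let f be a multiplicative function with f(d) > 0 for all squarefree d, let f' = f * μ (Dirichlet convolution), and let (λ_ν) be real numbers supported on squarefree ν < ξ. Define ζ_r for squarefree r < ξ by μ(r)ζ_r/f'(r) = Σ_{d < ξ/r, (d,r)=1, dr squarefree} λ_{dr}/f(dr). Then for all squarefree d < ξ, μ(d)λ_d/f(d) = Σ_{r < ξ/d, (r,d)=1, dr squarefree} ζ_{dr}/f'(dr). -/
open ArithmeticFunction Finset
open scoped ArithmeticFunction.Moebius ArithmeticFunction.zeta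

lemma sum_divisors_moebius' (n : ℕ) :
    ∑ r ∈ n.divisors, (μ r : ℤ) = if n = 1 then 1 else 0 := by
  have h : (μ * ζ : ArithmeticFunction ℤ) n = (1 : ArithmeticFunction ℤ) n := by
    rw [moebius_mul_coe_zeta]
  rw [coe_mul_zeta_apply, one_apply] at h
  exact h

/-- Möbius inversion relating Selberg sieve coefficients `λ` and transformed
coefficients `ζ`. -/
theorem selberg_lambda_zeta_inversion (f lam zet : ℕ → ℝ) (ξ : ℝ)
    (hf_one : f 1 = 1)
    (hf_mult : ∀ m n : ℕ, Nat.Coprime m n → f (m * n) = f m * f n)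
    (hf_pos : ∀ d : ℕ, Squarefree d → 0 < f d)
    (f' : ℕ → ℝ)
    (hf' : ∀ n : ℕ, 0 < n → f' n = ∑ d ∈ n.divisors, (μ (n / d) : ℝ) * f d)
    (hf'_ne : ∀ r : ℕ, Squarefree r → f' r ≠ 0)
    (hlam_supp : ∀ ν : ℕ, ¬ (Squarefree ν ∧ (ν : ℝ) < ξ) → lam ν = 0)
    (hzet : ∀ r : ℕ, Squarefree r → (r : ℝ) < ξ →
      (μ r : ℝ) * zet r / f' r =
        ∑ d ∈ (Finset.range (Nat.ceil ξ + 1)).filter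
            (fun d : ℕ => 0 < d ∧ (d : ℝ) < ξ / r ∧ Nat.Coprime d r ∧ Squarefree (d * r)),
          lam (d * r) / f (d * r)) :
    ∀ d : ℕ, Squarefree d → (d : ℝ) < ξ →
      (μ d : ℝ) * lam d / f d =
        ∑ r ∈ (Finset.range (Nat.ceil ξ + 1)).filter
            (fun r : ℕ => 0 < r ∧ (r : ℝ) < ξ / d ∧ Nat.Coprime r d ∧ Squarefree (d * r)),
          zet (d * r) / f' (d * r) := by
  intro d hd hdξ
  have hd0 : 0 < d := Nat.pos_of_ne_zero hd.ne_zero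
  have hd0' : (0 : ℝ) < d := by exact_mod_cast hd0
  have hd1' : (1 : ℝ) ≤ d := by exact_mod_cast hd0
  have hξpos : (0 : ℝ) < ξ := lt_of_le_of_lt hd0'.le hdξ
  -- notation
  set A : Finset ℕ := Finset.range (Nat.ceil ξ + 1) with hA
  have hmemA : ∀ n : ℕ, (n : ℝ) < ξ → n ∈ A := by
    intro n hn
    rw [hA, Finset.mem_range]
    exact lt_trans (Nat.lt_ceil.mpr hn) (Nat.lt_succ_self _)
  set F1 : Finset ℕ := A.filter
      (fun r : ℕ => 0 < r ∧ (r : ℝ) < ξ / d ∧ Nat.Coprime r d ∧ Squarefree (d * r)) with hF1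
  set F2 : ℕ → Finset ℕ := fun r => A.filter
      (fun e : ℕ => 0 < e ∧ (e : ℝ) < ξ / ((d * r : ℕ) : ℝ) ∧ Nat.Coprime e (d * r)
        ∧ Squarefree (e * (d * r))) with hF2
  set F3 : Finset ℕ := A.filter
      (fun ν : ℕ => 0 < ν ∧ (ν : ℝ) < ξ / d ∧ Squarefree (ν * d)) with hF3
  -- Step 1: rewrite each RHS term using hzet
  have step1 : ∑ r ∈ F1, zet (d * r) / f' (d * r)
      = ∑ r ∈ F1, ∑ e ∈ F2 r, (μ (d * r) : ℝ) * (lam (e * (d * r)) / f (e * (d * r))) := by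
    refine Finset.sum_congr rfl ?_
    intro r hr
    rw [hF1, Finset.mem_filter] at hr
    obtain ⟨hrA, hr0, hrlt, hrcop, hsq⟩ := hr
    have hdrξ : ((d * r : ℕ) : ℝ) < ξ := by
      push_cast
      rw [lt_div_iff₀ hd0'] at hrlt
      nlinarith
    have h := hzet (d * r) hsq hdrξ
    have h2 : (μ (d * r)) ^ 2 = 1 := moebius_sq_eq_one_of_squarefree hsq
    have hμ : (μ (d * r) : ℝ) * (μ (d * r) : ℝ) = 1 := by
      have : (((μ (d * r)) ^ 2 : ℤ) : ℝ) = 1 := by rw [h2]; norm_num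
      push_cast at this
      nlinarith [this]
    calc zet (d * r) / f' (d * r)
        = (μ (d * r) : ℝ) * ((μ (d * r) : ℝ) * zet (d * r) / f' (d * r)) := by
          rw [show (μ (d * r) : ℝ) * ((μ (d * r) : ℝ) * zet (d * r) / f' (d * r))
              = ((μ (d * r) : ℝ) * (μ (d * r) : ℝ)) * zet (d * r) / f' (d * r) from by ring,
            hμ, one_mul]
      _ = (μ (d * r) : ℝ) * ∑ e ∈ F2 r, lam (e * (d * r)) / f (e * (d * r)) := by rw [h]
      _ = ∑ e ∈ F2 r, (μ (d * r) : ℝ) * (lam (e * (d * r)) / f (e * (d * r))) :=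
          Finset.mul_sum _ _ _
  -- Step 2: reindex the double sum as a sum over pairs grouped by product
  have step2 : ∑ r ∈ F1, ∑ e ∈ F2 r, (μ (d * r) : ℝ) * (lam (e * (d * r)) / f (e * (d * r)))
      = ∑ ν ∈ F3, ∑ r ∈ ν.divisors, (μ d : ℝ) * (μ r : ℝ) * (lam (ν * d) / f (ν * d)) := by
    rw [Finset.sum_sigma', Finset.sum_sigma']
    refine Finset.sum_nbij' (fun p => ⟨p.1 * p.2, p.1⟩) (fun p => ⟨p.2, p.1 / p.2⟩)
      ?_ ?_ ?_ ?_ ?_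
    · rintro ⟨r, e⟩ hp
      rw [Finset.mem_sigma, hF1, hF2, Finset.mem_filter, Finset.mem_filter] at hp
      obtain ⟨⟨hrA, hr0, hrlt, hrcop, hsqdr⟩, ⟨heA, he0, helt, hecop, hsq⟩⟩ := hp
      have hr0' : (0 : ℝ) < r := by exact_mod_cast hr0
      have hdr0' : (0 : ℝ) < ((d * r : ℕ) : ℝ) := by positivity
      have hprod : ((r * e : ℕ) : ℝ) < ξ / d := by
        rw [lt_div_iff₀ hdr0'] at helt
        rw [lt_div_iff₀ hd0']
        push_cast at helt ⊢
        nlinarith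
      rw [Finset.mem_sigma, hF3, Finset.mem_filter, Nat.mem_divisors]
      refine ⟨⟨hmemA _ (lt_of_lt_of_le hprod (div_le_self hξpos.le hd1')), ?_, hprod, ?_⟩,
        dvd_mul_right _ _, (Nat.mul_pos hr0 he0).ne'⟩
      · exact Nat.mul_pos hr0 he0
      · rw [show r * e * d = e * (d * r) from by ring]; exact hsq
    · rintro ⟨ν, r⟩ hp
      rw [Finset.mem_sigma, hF3, Finset.mem_filter, Nat.mem_divisors] at hp
      obtain ⟨⟨hνA, hν0, hνlt, hsq⟩, hrdvd, hν0'⟩ := hp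
      have hr0 : 0 < r := Nat.pos_of_dvd_of_pos hrdvd hν0
      have hrleν : r ≤ ν := Nat.le_of_dvd hν0 hrdvd
      have hνcop : Nat.Coprime ν d := Nat.coprime_of_squarefree_mul hsq
      have hνξ : (ν : ℝ) < ξ := lt_of_lt_of_le hνlt (div_le_self hξpos.le hd1')
      have hrA : r ∈ A := hmemA r (lt_of_le_of_lt (by exact_mod_cast hrleν) hνξ)
      have hrcop : Nat.Coprime r d := Nat.Coprime.coprime_dvd_left hrdvd hνcop
      have hsqdr : Squarefree (d * r) := by
        refine hsq.squarefree_of_dvd ?_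
        rw [show ν * d = d * ν from by ring]
        exact mul_dvd_mul_left d hrdvd
      have hdiv : ν / r * r = ν := Nat.div_mul_cancel hrdvd
      have hkey : ν / r * (d * r) = ν * d := by
        calc ν / r * (d * r) = ν / r * r * d := by ring
          _ = ν * d := by rw [hdiv]
      rw [Finset.mem_sigma, hF1, hF2, Finset.mem_filter, Finset.mem_filter]
      have hrlt : (r : ℝ) < ξ / d :=
        lt_of_le_of_lt (by exact_mod_cast hrleν : (r : ℝ) ≤ ν) hνlt
      have hsq2 : Squarefree (ν / r * (d * r)) := by rw [hkey]; exact hsq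
      have hnr0 : 0 < ν / r := Nat.div_pos hrleν hr0
      refine ⟨⟨hrA, hr0, hrlt, hrcop, hsqdr⟩,
        hmemA _ (lt_of_le_of_lt
          (by exact_mod_cast Nat.div_le_self ν r : ((ν / r : ℕ) : ℝ) ≤ ν) hνξ),
        hnr0, ?_, Nat.coprime_of_squarefree_mul hsq2, hsq2⟩
      · have hdr0' : (0 : ℝ) < ((d * r : ℕ) : ℝ) := by
          exact_mod_cast Nat.mul_pos hd0 hr0
        rw [lt_div_iff₀ hdr0']
        have : (((ν / r) * (d * r) : ℕ) : ℝ) = (((ν * d : ℕ)) : ℝ) := by rw [hkey]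
        push_cast at this
        rw [show ((ν / r : ℕ) : ℝ) * ((d * r : ℕ) : ℝ) = ((ν / r : ℕ) : ℝ) * ((d : ℝ) * r)
          from by push_cast; ring, this]
        rw [lt_div_iff₀ hd0'] at hνlt
        exact hνlt
    · rintro ⟨r, e⟩ hp
      rw [Finset.mem_sigma, hF1, Finset.mem_filter] at hp
      have hr0 : 0 < r := hp.1.2.1
      show (⟨r, r * e / r⟩ : Σ _ : ℕ, ℕ) = ⟨r, e⟩
      rw [Nat.mul_div_cancel_left e hr0]
    · rintro ⟨ν, r⟩ hp
      rw [Finset.mem_sigma, Nat.mem_divisors] at hp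
      show (⟨r * (ν / r), r⟩ : Σ _ : ℕ, ℕ) = ⟨ν, r⟩
      rw [Nat.mul_div_cancel' hp.2.1]
    · rintro ⟨r, e⟩ hp
      rw [Finset.mem_sigma, hF1, Finset.mem_filter] at hp
      obtain ⟨⟨hrA, hr0, hrlt, hrcop, hsqdr⟩, _⟩ := hp
      have hmul : μ (d * r) = μ d * μ r := isMultiplicative_moebius.map_mul_of_coprime hrcop.symm
      show (μ (d * r) : ℝ) * (lam (e * (d * r)) / f (e * (d * r)))
          = (μ d : ℝ) * (μ r : ℝ) * (lam (r * e * d) / f (r * e * d))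
      rw [hmul, show e * (d * r) = r * e * d from by ring]
      push_cast
      ring
  -- Step 3: evaluate the inner Möbius sum
  have step3 : ∑ ν ∈ F3, ∑ r ∈ ν.divisors, (μ d : ℝ) * (μ r : ℝ) * (lam (ν * d) / f (ν * d))
      = (μ d : ℝ) * lam d / f d := by
    have inner : ∀ ν ∈ F3, ∑ r ∈ ν.divisors, (μ d : ℝ) * (μ r : ℝ) * (lam (ν * d) / f (ν * d))
        = ((μ d : ℝ) * (lam (ν * d) / f (ν * d))) * (if ν = 1 then 1 else 0) := by
      intro ν hν
      have : ∑ r ∈ ν.divisors, (μ d : ℝ) * (μ r : ℝ) * (lam (ν * d) / f (ν * d))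
          = ((μ d : ℝ) * (lam (ν * d) / f (ν * d))) * ∑ r ∈ ν.divisors, (μ r : ℝ) := by
        rw [Finset.mul_sum]
        exact Finset.sum_congr rfl fun r _ => by ring
      rw [this]
      congr 1
      have h := sum_divisors_moebius' ν
      have : ∑ r ∈ ν.divisors, (μ r : ℝ) = ((∑ r ∈ ν.divisors, (μ r : ℤ) : ℤ) : ℝ) := by
        push_cast; rfl
      rw [this, h]
      split_ifs <;> norm_num
    rw [Finset.sum_congr rfl inner]
    have h1mem : (1 : ℕ) ∈ F3 := by
      rw [hF3, Finset.mem_filter]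
      refine ⟨hmemA 1 (by exact_mod_cast lt_of_le_of_lt hd1' hdξ), Nat.one_pos, ?_, ?_⟩
      · rw [show ((1 : ℕ) : ℝ) = 1 from by norm_num]
        exact (one_lt_div hd0').mpr hdξ
      · rw [one_mul]; exact hd
    rw [Finset.sum_eq_single_of_mem 1 h1mem]
    · rw [if_pos rfl, mul_one, one_mul]
      ring
    · intro ν _ hν1
      rw [if_neg hν1, mul_zero]
  rw [step1, step2, step3]
end

section
/- Suppose n is a positive integer with no prime factor below y, no repeated prime factor in [y, z), and |n| ≤ x^{κ+ε}, where z = x^{1/U}. If Σ_{p | n, y ≤ p < z} (1 - log p / log z) ≤ b, then Ω(n) ≤ b + U(κ + ε), where Ω(n) is the number of prime factors of n counted with multiplicity. -/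
open Finset ArithmeticFunction ArithmeticFunction.Omega

theorem richert_weight_omega_bound (n : ℕ) (hn : 0 < n)
    (x y z U κ ε b : ℝ) (hx : 1 < x) (hU : 0 < U) (hκ : 0 < κ) (hε : 0 < ε)
    (hz : z = x ^ (1 / U))
    (hy : ∀ p : ℕ, p.Prime → p ∣ n → y ≤ (p : ℝ))
    (hsq : ∀ p : ℕ, p.Prime → y ≤ (p : ℝ) → (p : ℝ) < z → ¬ p ^ 2 ∣ n)
    (hsize : (n : ℝ) ≤ x ^ (κ + ε))
    (hweight : ∑ p ∈ n.primeFactors.filter (fun p : ℕ => y ≤ (p : ℝ) ∧ (p : ℝ) < z),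
        (1 - Real.log p / Real.log z) ≤ b) :
    (Ω n : ℝ) ≤ b + U * (κ + ε) := by
  have hlogx : 0 < Real.log x := Real.log_pos hx
  have hlogz : Real.log z = (1 / U) * Real.log x := by
    rw [hz, Real.log_rpow (lt_trans one_pos hx)]
  have hLpos : 0 < Real.log z := by rw [hlogz]; positivity
  -- Ω n as sum of factorizations
  have hOmega : (Ω n : ℝ) = ∑ p ∈ n.primeFactors, (n.factorization p : ℝ) := by
    rw [cardFactors_apply]
    have : n.primeFactorsList.length = Multiset.card (n.primeFactorsList : Multiset ℕ) := rfl
    rw [this, ← Multiset.toFinset_sum_count_eq]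
    push_cast
    refine Finset.sum_congr (by simp) fun p _ => ?_
    rw [Multiset.coe_count, Nat.primeFactorsList_count_eq]
  -- log n as sum
  have hlogn : Real.log n = ∑ p ∈ n.primeFactors, (n.factorization p : ℝ) * Real.log p := by
    conv_lhs => rw [← Nat.factorization_prod_pow_eq_self hn.ne']
    rw [Finsupp.prod]
    push_cast
    rw [Real.log_prod]
    · exact Finset.sum_congr rfl fun p hp => by rw [Real.log_pow]
    · intro p hp
      have hp' : p.Prime := Nat.prime_of_mem_primeFactors hp
      have : (0:ℝ) < p := by exact_mod_cast hp'.pos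
      positivity
  -- termwise bound
  have key : ∀ p ∈ n.primeFactors,
      (n.factorization p : ℝ) ≤
        (if y ≤ (p : ℝ) ∧ (p : ℝ) < z then (1 - Real.log p / Real.log z) else 0)
          + (n.factorization p : ℝ) * Real.log p / Real.log z := by
    intro p hp
    have hpp : p.Prime := Nat.prime_of_mem_primeFactors hp
    have hpd : p ∣ n := Nat.dvd_of_mem_primeFactors hp
    have hyp : y ≤ (p : ℝ) := hy p hpp hpd
    by_cases hpz : (p : ℝ) < z
    · have h1 : n.factorization p = 1 := by
        have hle : 1 ≤ n.factorization p :=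
          (Nat.Prime.dvd_iff_one_le_factorization hpp hn.ne').mp hpd
        have hlt : n.factorization p < 2 := by
          by_contra h
          exact hsq p hpp hyp hpz
            ((Nat.Prime.pow_dvd_iff_le_factorization hpp hn.ne').mpr (by omega))
        omega
      rw [if_pos ⟨hyp, hpz⟩, h1]
      push_cast
      rw [one_mul]
      linarith
    · rw [if_neg (by tauto), zero_add]
      have hz0 : (0:ℝ) < z := by
        rw [hz]; exact Real.rpow_pos_of_pos (by linarith) _
      have hzp : Real.log z ≤ Real.log p := Real.log_le_log hz0 (not_lt.mp hpz)
      have hf : (0 : ℝ) ≤ (n.factorization p : ℝ) := by positivity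
      rw [le_div_iff₀ hLpos]
      exact mul_le_mul_of_nonneg_left hzp hf
  -- combine
  have hsum := Finset.sum_le_sum key
  rw [← hOmega] at hsum
  have hsplit : ∑ p ∈ n.primeFactors,
      ((if y ≤ (p : ℝ) ∧ (p : ℝ) < z then (1 - Real.log p / Real.log z) else 0)
        + (n.factorization p : ℝ) * Real.log p / Real.log z)
      = (∑ p ∈ n.primeFactors.filter (fun p : ℕ => y ≤ (p : ℝ) ∧ (p : ℝ) < z),
          (1 - Real.log p / Real.log z)) + Real.log n / Real.log z := by
    rw [Finset.sum_add_distrib, Finset.sum_ite, Finset.sum_const_zero, add_zero,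
      hlogn, Finset.sum_div]
  rw [hsplit] at hsum
  have hlogn_le : Real.log n ≤ (κ + ε) * Real.log x := by
    calc Real.log n ≤ Real.log (x ^ (κ + ε)) :=
          Real.log_le_log (by exact_mod_cast hn) hsize
      _ = (κ + ε) * Real.log x := Real.log_rpow (lt_trans one_pos hx) _
  have hfinal : Real.log n / Real.log z ≤ U * (κ + ε) := by
    rw [hlogz, div_le_iff₀ (by positivity)]
    have : U * (κ + ε) * (1 / U * Real.log x) = (κ + ε) * Real.log x := by
      field_simp
    linarith [hlogn_le, this]
  linarith
end

section
/- Let j_κ be the continuous solution of the delay differential equation w j_κ'(w) = κ j_κ(w) - κ j_κ(w-1) with j_κ(w) = c_κ w^κ for 0 < w ≤ 1 and j_κ(w) = 0 for w ≤ 0, where c_κ = e^{-γκ}/Γ(κ+1). Then j_κ is nondecreasing on (0, ∞). -/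
open Real Set

theorem j_kappa_monotone (κ : ℝ) (hκ : 0 < κ) (j : ℝ → ℝ)
    (hcont : Continuous j)
    (hzero : ∀ w : ℝ, w ≤ 0 → j w = 0)
    (hinit : ∀ w : ℝ, 0 < w → w ≤ 1 →
      j w = Real.exp (-Real.eulerMascheroniConstant * κ) / Real.Gamma (κ + 1) * w ^ κ)
    (hode : ∀ w : ℝ, 0 < w → HasDerivAt j (κ * (j w - j (w - 1)) / w) w) :
    MonotoneOn j (Set.Ioi (0 : ℝ)) := by
  have hcpos : 0 < Real.exp (-Real.eulerMascheroniConstant * κ) / Real.Gamma (κ + 1) :=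
    div_pos (Real.exp_pos _) (Real.Gamma_pos_of_pos (by linarith))
  have hpos1 : ∀ w : ℝ, 0 < w → w ≤ 1 → 0 < j w := by
    intro w hw hw1
    rw [hinit w hw hw1]
    exact mul_pos hcpos (Real.rpow_pos_of_pos hw κ)
  -- key claim: j (w - 1) ≤ j w for all w > 0
  have key : ∀ w : ℝ, 0 < w → j (w - 1) ≤ j w := by
    by_contra hcon
    push_neg at hcon
    obtain ⟨w0, hw0, hlt0⟩ := hcon
    set B : Set ℝ := {w | 0 < w ∧ j w < j (w - 1)} with hBdef
    have hBne : B.Nonempty := ⟨w0, hw0, hlt0⟩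
    have hBgt1 : ∀ b ∈ B, 1 < b := by
      intro b hb
      by_contra h
      push_neg at h
      have hb0 := hb.1
      have h1 : j (b - 1) = 0 := hzero _ (by linarith)
      have h2 := hpos1 b hb0 h
      have := hb.2
      rw [h1] at this
      linarith
    have hBbd : BddBelow B := ⟨1, fun b hb => (hBgt1 b hb).le⟩
    set ws := sInf B with hws
    have hws1 : 1 ≤ ws := le_csInf hBne (fun b hb => (hBgt1 b hb).le)
    have hws0 : 0 < ws := by linarith
    have hBopen : IsOpen B := by
      have : B = Set.Ioi (0:ℝ) ∩ {w | j w < j (w - 1)} := by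
        ext w; simp [hBdef, Set.mem_setOf_eq, and_comm]
      rw [this]
      exact isOpen_Ioi.inter (isOpen_lt hcont (hcont.comp (continuous_id.sub continuous_const)))
    have hnotin : ws ∉ B := by
      intro h
      obtain ⟨ε, hε, hball⟩ := Metric.isOpen_iff.1 hBopen ws h
      have hmem : ws - ε/2 ∈ B := by
        apply hball
        simp only [Metric.mem_ball, Real.dist_eq]
        rw [abs_of_nonpos (by linarith)]
        linarith
      have := csInf_le hBbd hmem
      linarith
    have hlow : ∀ w : ℝ, 0 < w → w ≤ ws → j (w - 1) ≤ j w := by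
      intro w hw hwle
      by_contra h
      push_neg at h
      have hwB : w ∈ B := ⟨hw, h⟩
      have := csInf_le hBbd hwB
      have : w = ws := le_antisymm hwle this
      exact hnotin (this ▸ hwB)
    -- j is monotone on [0, ws]
    have mono1 : MonotoneOn j (Set.Icc 0 ws) := by
      apply monotoneOn_of_deriv_nonneg (convex_Icc 0 ws) hcont.continuousOn
      · intro x hx
        rw [interior_Icc] at hx
        exact (hode x hx.1).differentiableAt.differentiableWithinAt
      · intro x hx
        rw [interior_Icc] at hx
        rw [(hode x hx.1).deriv]
        apply div_nonneg _ hx.1.le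
        exact mul_nonneg hκ.le (sub_nonneg.2 (hlow x hx.1 hx.2.le))
    have hM : ∀ x : ℝ, x ≤ ws → j x ≤ j ws := by
      intro x hx
      rcases le_or_gt x 0 with h0 | h0
      · rw [hzero x h0]
        have : j 0 ≤ j ws := mono1 ⟨le_refl 0, hws0.le⟩ ⟨hws0.le, le_refl ws⟩ hws0.le
        rw [hzero 0 le_rfl] at this
        exact this
      · exact mono1 ⟨h0.le, hx⟩ ⟨hws0.le, le_refl ws⟩ hx
    -- auxiliary function G
    set G : ℝ → ℝ := fun w => w ^ (-κ) * (j w - j ws) with hGdef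
    have hGderiv : ∀ w : ℝ, ws < w → w < ws + 1 →
        HasDerivAt G (κ * w ^ (-κ - 1) * (j ws - j (w - 1))) w := by
      intro w hw1 hw2
      have hwpos : 0 < w := lt_trans hws0 hw1
      have h1 : HasDerivAt (fun t : ℝ => t ^ (-κ)) (-κ * w ^ (-κ - 1)) w :=
        Real.hasDerivAt_rpow_const (Or.inl hwpos.ne')
      have h2 : HasDerivAt (fun t => j t - j ws) (κ * (j w - j (w - 1)) / w) w :=
        (hode w hwpos).sub_const _
      have h3 := h1.mul h2
      convert h3 using 1
      · rfl
      · rfl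
      · rfl
      have hr : w ^ (-κ - 1) = w ^ (-κ) / w := by
        rw [show -κ - 1 = -κ + (-1) by ring, Real.rpow_add hwpos, Real.rpow_neg_one]
        ring
      rw [hr]
      field_simp
      ring
    have hGmono : MonotoneOn G (Set.Icc ws (ws + 1)) := by
      apply monotoneOn_of_deriv_nonneg (convex_Icc _ _)
      · apply ContinuousOn.mul _ (hcont.sub continuous_const).continuousOn
        intro x hx
        have hxpos : 0 < x := lt_of_lt_of_le hws0 hx.1
        exact (Real.continuousAt_rpow_const x (-κ) (Or.inl hxpos.ne')).continuousWithinAt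
      · intro x hx
        rw [interior_Icc] at hx
        exact (hGderiv x hx.1 hx.2).differentiableAt.differentiableWithinAt
      · intro x hx
        rw [interior_Icc] at hx
        rw [(hGderiv x hx.1 hx.2).deriv]
        have hxpos : 0 < x := lt_trans hws0 hx.1
        apply mul_nonneg (mul_nonneg hκ.le (Real.rpow_nonneg hxpos.le _))
        exact sub_nonneg.2 (hM (x - 1) (by linarith [hx.2]))
    have hGws : G ws = 0 := by simp [hGdef]
    have hjge : ∀ w : ℝ, ws ≤ w → w ≤ ws + 1 → j ws ≤ j w := by
      intro w hw1 hw2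
      have h := hGmono ⟨le_refl ws, by linarith⟩ ⟨hw1, hw2⟩ hw1
      rw [hGws] at h
      have hwpos : 0 < w := lt_of_lt_of_le hws0 hw1
      have hrp : 0 < w ^ (-κ) := Real.rpow_pos_of_pos hwpos _
      simp only [hGdef] at h
      nlinarith
    -- contradiction: find b ∈ B with b < ws + 1
    have hex : ∃ b ∈ B, b < ws + 1 := by
      by_contra h
      push_neg at h
      have : ws + 1 ≤ ws := le_csInf hBne h
      linarith
    obtain ⟨b, hbB, hblt⟩ := hex
    have hbge : ws ≤ b := csInf_le hBbd hbB
    have h1 : j ws ≤ j b := hjge b hbge hblt.le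
    have h2 : j (b - 1) ≤ j ws := hM (b - 1) (by linarith)
    have := hbB.2
    linarith
  -- conclude monotonicity on (0, ∞)
  apply monotoneOn_of_deriv_nonneg (convex_Ioi 0) hcont.continuousOn
  · intro x hx
    rw [interior_Ioi] at hx
    exact (hode x hx).differentiableAt.differentiableWithinAt
  · intro x hx
    rw [interior_Ioi] at hx
    rw [(hode x hx).deriv]
    apply div_nonneg _ (le_of_lt hx)
    exact mul_nonneg hκ.le (sub_nonneg.2 (key x hx))
end
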